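/- arXiv:2407.04474 — 9 statements merged into one kernel-verified Lean document; each statement's English description precedes it below -/
import Mathlib

section
/- For every n ≥ 1, every nonnegative weight function w and every ranking profile r consistent with w, there exists an action sequence π such that the weight of the matching induced by π via serial dictatorship equals the maximum weight over all perfect matchings, i.e. w(M(π)) = max over perfect matchings M of w(M). (In other words, the price of serial dictatorship of maximum-weight perfect matching in complete bipartite graphs is 1.) -/
open Function

lemma cycle_perm {n : ℕ} (f : Fin n → Fin n) (S : Finset (Fin n))
    (hS : ∀ x ∈ S, f x ∈ S) (hne : ∀ x ∈ S, f x ≠ x) (h0 : S.Nonempty) :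
    ∃ σ : Equiv.Perm (Fin n), (∃ x, σ x ≠ x) ∧
      ∀ x, σ x = x ∨ (x ∈ S ∧ σ x = f x) := by
  obtain ⟨x₀, hx₀⟩ := h0
  have hiterS : ∀ m, f^[m] x₀ ∈ S := by
    intro m
    induction m with
    | zero => simpa using hx₀
    | succ m ih => rw [Function.iterate_succ_apply']; exact hS _ ih
  obtain ⟨m₁, m₂, hm, heq⟩ :=
    Finite.exists_ne_map_eq_of_infinite (fun m : ℕ => f^[m] x₀)
  wlog hlt : m₁ < m₂ generalizing m₁ m₂
  · exact this m₂ m₁ hm.symm heq.symm (by omega)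
  set b := f^[m₁] x₀ with hbdef
  have hb : IsPeriodicPt f (m₂ - m₁) b := by
    show f^[m₂ - m₁] b = b
    rw [hbdef, ← Function.iterate_add_apply]
    rw [Nat.sub_add_cancel hlt.le]
    exact heq.symm
  have hbp : b ∈ periodicPts f := mk_mem_periodicPts (by omega) hb
  set K := Function.minimalPeriod f b with hKdef
  have hK : 0 < K := Function.minimalPeriod_pos_of_mem_periodicPts hbp
  have hbS : ∀ t, f^[t] b ∈ S := by
    intro t; rw [hbdef, ← Function.iterate_add_apply]; exact hiterS _
  set C : Finset (Fin n) := (Finset.range K).image (fun t => f^[t] b) with hCdef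
  have memC : ∀ x, x ∈ C ↔ ∃ t < K, f^[t] b = x := by
    intro x; simp [hCdef]
  have hfC : ∀ x ∈ C, f x ∈ C := by
    intro x hx
    obtain ⟨t, ht, rfl⟩ := (memC x).1 hx
    rw [memC]
    refine ⟨(t + 1) % K, Nat.mod_lt _ hK, ?_⟩
    rw [Function.iterate_mod_minimalPeriod_eq]
    exact Function.iterate_succ_apply' f t b
  have hinjmod : ∀ s t : ℕ, s < K → t < K → f^[s+1] b = f^[t+1] b → s = t := by
    intro s t hs ht h
    have h' : f^[(s+1) % K] b = f^[(t+1) % K] b := by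
      rw [Function.iterate_mod_minimalPeriod_eq, Function.iterate_mod_minimalPeriod_eq, h]
    have hd : ((s+1) : ℕ) % K = (t+1) % K := Function.iterate_injOn_Iio_minimalPeriod
      (Set.mem_Iio.2 (Nat.mod_lt _ hK : (s+1) % K < K))
      (Set.mem_Iio.2 (Nat.mod_lt _ hK : (t+1) % K < K)) h'
    rcases Nat.lt_or_ge (s+1) K with h1 | h1 <;> rcases Nat.lt_or_ge (t+1) K with h2 | h2
    · rw [Nat.mod_eq_of_lt h1, Nat.mod_eq_of_lt h2] at hd; omega
    · have ht1 : t + 1 = K := by omega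
      rw [Nat.mod_eq_of_lt h1, ht1, Nat.mod_self] at hd; omega
    · have hs1 : s + 1 = K := by omega
      rw [hs1, Nat.mod_self, Nat.mod_eq_of_lt h2] at hd; omega
    · omega
  classical
  set g : Fin n → Fin n := fun x => if x ∈ C then f x else x with hgdef
  have hginj : Function.Injective g := by
    intro x y hxy
    by_cases hx : x ∈ C <;> by_cases hy : y ∈ C <;>
      simp only [hgdef, hx, hy, if_pos, if_neg, if_true, if_false] at hxy
    · obtain ⟨s, hs, rfl⟩ := (memC x).1 hx
      obtain ⟨t, ht, rfl⟩ := (memC y).1 hy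
      rw [← Function.iterate_succ_apply' f s, ← Function.iterate_succ_apply' f t] at hxy
      exact congrArg (fun u => f^[u] b) (hinjmod s t hs ht hxy)
    · exact absurd (hxy ▸ hfC x hx) hy
    · exact absurd (hxy ▸ hfC y hy) (by exact hx)
    · exact hxy
  have hgbij : Function.Bijective g := Finite.injective_iff_bijective.mp hginj
  refine ⟨Equiv.ofBijective g hgbij, ?_, ?_⟩
  · refine ⟨b, ?_⟩
    have hbC : b ∈ C := (memC b).2 ⟨0, hK, rfl⟩
    show g b ≠ b
    simp only [hgdef, if_pos hbC]
    exact hne b (hbS 0)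
  · intro x
    by_cases hx : x ∈ C
    · right
      obtain ⟨t, ht, htx⟩ := (memC x).1 hx
      exact ⟨htx ▸ hbS t, by simp [hgdef, if_pos hx]⟩
    · left; simp [hgdef, if_neg hx]

/-- Key lemma: for a max-weight matching with minimal total rank among
max-weight matchings, every nonempty agent set contains an agent whose own
item is her favourite among the items of that set. -/
lemma key_lemma {n : ℕ}
    (w : Fin n → Fin n → ℝ) (r : Fin n → (Fin n ≃ Fin n))
    (hc : ∀ i j₁ j₂, w i j₁ > w i j₂ → r i j₁ < r i j₂)
    (M : Fin n ≃ Fin n)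
    (hmax : ∀ M' : Fin n ≃ Fin n, (∑ i, w i (M' i)) ≤ ∑ i, w i (M i))
    (hmin : ∀ M' : Fin n ≃ Fin n, (∑ i, w i (M' i)) = (∑ i, w i (M i)) →
      (∑ i, ((r i (M i) : Fin n) : ℕ)) ≤ ∑ i, ((r i (M' i) : Fin n) : ℕ))
    (S : Finset (Fin n)) (hS : S.Nonempty) :
    ∃ i ∈ S, ∀ j ∈ S, r i (M i) ≤ r i (M j) := by
  classical
  by_contra hcon
  push_neg at hcon
  -- for each i ∈ S pick a strictly better j ∈ S
  have hch : ∀ i : Fin n, ∃ j : Fin n, i ∈ S → (j ∈ S ∧ r i (M j) < r i (M i)) := by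
    intro i
    by_cases hi : i ∈ S
    · obtain ⟨j, hj, hjlt⟩ := hcon i hi
      exact ⟨j, fun _ => ⟨hj, hjlt⟩⟩
    · exact ⟨i, fun h => absurd h hi⟩
  choose f hf using hch
  have hfS : ∀ x ∈ S, f x ∈ S := fun x hx => (hf x hx).1
  have hfr : ∀ x ∈ S, r x (M (f x)) < r x (M x) := fun x hx => (hf x hx).2
  have hne : ∀ x ∈ S, f x ≠ x := by
    intro x hx h
    exact absurd (h ▸ hfr x hx) (lt_irrefl _)
  obtain ⟨σ, ⟨x₁, hx₁⟩, hσ⟩ := cycle_perm f S hfS hne hS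
  set M' : Fin n ≃ Fin n := σ.trans M with hM'def
  have hM' : ∀ i, M' i = M (σ i) := fun i => rfl
  -- termwise weight comparison
  have hwterm : ∀ i, w i (M i) ≤ w i (M' i) := by
    intro i
    rcases hσ i with h | ⟨hiS, h⟩
    · rw [hM', h]
    · rw [hM', h]
      by_contra hlt
      push_neg at hlt
      exact absurd (hc i (M i) (M (f i)) hlt) (asymm (hfr i hiS))
  have hwsum : (∑ i, w i (M i)) ≤ ∑ i, w i (M' i) := Finset.sum_le_sum fun i _ => hwterm i
  have hweq : (∑ i, w i (M' i)) = ∑ i, w i (M i) := le_antisymm (hmax M') hwsum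
  -- termwise rank comparison, strict somewhere
  have hrterm : ∀ i, ((r i (M' i) : Fin n) : ℕ) ≤ ((r i (M i) : Fin n) : ℕ) := by
    intro i
    rcases hσ i with h | ⟨hiS, h⟩
    · rw [hM', h]
    · rw [hM', h]
      exact le_of_lt (hfr i hiS)
  have hx₁S : x₁ ∈ S ∧ σ x₁ = f x₁ := (hσ x₁).resolve_left hx₁
  have hrstrict : ((r x₁ (M' x₁) : Fin n) : ℕ) < ((r x₁ (M x₁) : Fin n) : ℕ) := by
    rw [hM', hx₁S.2]
    exact hfr x₁ hx₁S.1
  have hrsum : (∑ i, ((r i (M' i) : Fin n) : ℕ)) < ∑ i, ((r i (M i) : Fin n) : ℕ) :=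
    Finset.sum_lt_sum (fun i _ => hrterm i) ⟨x₁, Finset.mem_univ _, hrstrict⟩
  exact absurd (hmin M' hweq) (not_le.mpr hrsum)

/-- `M` is the perfect matching induced by the action sequence `π` via serial
dictatorship with ranking profile `r`: for every position `k`, the item
`M (π k)` has minimal rank under `r (π k)` among the items not picked by the
agents acting before position `k`. -/
def IsSDMatching {n : ℕ} (r : Fin n → (Fin n ≃ Fin n)) (π M : Fin n ≃ Fin n) : Prop :=
  ∀ k j : Fin n, (∀ t : Fin n, t < k → M (π t) ≠ j) →
    r (π k) (M (π k)) ≤ r (π k) j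

/-- The price of serial dictatorship of maximum-weight perfect matching is `1`:
there is an action sequence whose serial-dictatorship matching achieves the
maximum weight over all perfect matchings. -/
theorem exists_welfare_optimal_action_sequence
    (n : ℕ) (hn : 1 ≤ n)
    (w : Fin n → Fin n → ℝ) (hw : ∀ i j, 0 ≤ w i j)
    (r : Fin n → (Fin n ≃ Fin n))
    (hc : ∀ i j₁ j₂, w i j₁ > w i j₂ → r i j₁ < r i j₂) :
    ∃ π M : Fin n ≃ Fin n, IsSDMatching r π M ∧
      (∑ i, w i (M i)) =
        (Finset.univ : Finset (Fin n ≃ Fin n)).sup'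
          ⟨Equiv.refl (Fin n), Finset.mem_univ _⟩
          (fun M'' => ∑ i, w i (M'' i)) := by
  classical
  set ne : (Finset.univ : Finset (Fin n ≃ Fin n)).Nonempty :=
    ⟨Equiv.refl (Fin n), Finset.mem_univ _⟩ with hne
  set s : ℝ := Finset.univ.sup' ne (fun M'' : Fin n ≃ Fin n => ∑ i, w i (M'' i)) with hs
  -- the set of maximum-weight matchings
  set T : Finset (Fin n ≃ Fin n) :=
    Finset.univ.filter (fun M'' => (∑ i, w i (M'' i)) = s) with hT
  have hTne : T.Nonempty := by
    obtain ⟨M₀, _, hM₀⟩ := Finset.exists_mem_eq_sup' ne (fun M'' : Fin n ≃ Fin n => ∑ i, w i (M'' i))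
    exact ⟨M₀, Finset.mem_filter.2 ⟨Finset.mem_univ _, hM₀.symm⟩⟩
  obtain ⟨M, hMT, hMmin⟩ := Finset.exists_min_image T
    (fun M'' : Fin n ≃ Fin n => ∑ i, ((r i (M'' i) : Fin n) : ℕ)) hTne
  have hMs : (∑ i, w i (M i)) = s := (Finset.mem_filter.1 hMT).2
  have hmax : ∀ M' : Fin n ≃ Fin n, (∑ i, w i (M' i)) ≤ ∑ i, w i (M i) := by
    intro M'
    rw [hMs]
    exact Finset.le_sup' (fun M'' : Fin n ≃ Fin n => ∑ i, w i (M'' i)) (Finset.mem_univ M')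
  have hmin : ∀ M' : Fin n ≃ Fin n, (∑ i, w i (M' i)) = (∑ i, w i (M i)) →
      (∑ i, ((r i (M i) : Fin n) : ℕ)) ≤ ∑ i, ((r i (M' i) : Fin n) : ℕ) := by
    intro M' h
    exact hMmin M' (Finset.mem_filter.2 ⟨Finset.mem_univ _, h.trans hMs⟩)
  have KL : ∀ S : Finset (Fin n), S.Nonempty →
      ∃ i ∈ S, ∀ j ∈ S, r i (M i) ≤ r i (M j) :=
    key_lemma w r hc M hmax hmin
  -- choice function
  set nxt : Finset (Fin n) → Fin n := fun S =>
    if h : S.Nonempty then (KL S h).choose else ⟨0, hn⟩ with hnxt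
  have hnxt_spec : ∀ S : Finset (Fin n), (h : S.Nonempty) →
      nxt S ∈ S ∧ ∀ j ∈ S, r (nxt S) (M (nxt S)) ≤ r (nxt S) (M j) := by
    intro S h
    simp only [hnxt, dif_pos h]
    obtain ⟨h1, h2⟩ := (KL S h).choose_spec
    exact ⟨h1, h2⟩
  -- the remaining-agents sets
  set A : ℕ → Finset (Fin n) :=
    fun k => Nat.rec (Finset.univ) (fun _ Sk => Sk.erase (nxt Sk)) k with hA
  have hA0 : A 0 = Finset.univ := rfl
  have hAsucc : ∀ k, A (k + 1) = (A k).erase (nxt (A k)) := fun k => rfl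
  set p : ℕ → Fin n := fun k => nxt (A k) with hp
  have hAmem : ∀ k, ∀ x : Fin n, x ∈ A k ↔ ∀ t < k, p t ≠ x := by
    intro k
    induction k with
    | zero => simp [hA0]
    | succ k ih =>
      intro x
      rw [hAsucc, Finset.mem_erase, ih]
      constructor
      · rintro ⟨h1, h2⟩ t ht
        rcases Nat.lt_succ_iff_lt_or_eq.1 ht with h | rfl
        · exact h2 t h
        · exact fun h => h1 (h ▸ rfl)
      · intro h
        exact ⟨fun hx => h k (Nat.lt_succ_self k) hx.symm, fun t ht => h t (ht.trans (Nat.lt_succ_self k))⟩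
  have hcard : ∀ k, k ≤ n → (A k).card = n - k := by
    intro k
    induction k with
    | zero => simp [hA0]
    | succ k ih =>
      intro hk
      have hk' : k ≤ n := Nat.le_of_succ_le hk
      have hne' : (A k).Nonempty := by
        rw [← Finset.card_pos, ih hk']; omega
      rw [hAsucc, Finset.card_erase_of_mem (hnxt_spec (A k) hne').1, ih hk']
      omega
  have hAne : ∀ k, k < n → (A k).Nonempty := by
    intro k hk
    rw [← Finset.card_pos, hcard k hk.le]; omega
  have hpA : ∀ k, k < n → p k ∈ A k := fun k hk => (hnxt_spec (A k) (hAne k hk)).1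
  -- injectivity
  have hpinj : ∀ s t : ℕ, s < t → t < n → p s ≠ p t := by
    intro s t hst htn
    have := ((hAmem t (p t)).1 (hpA t htn)) s hst
    exact this
  set q : Fin n → Fin n := fun k => p k.val with hq
  have hqinj : Function.Injective q := by
    intro a b hab
    by_contra hne'
    rcases Ne.lt_or_gt hne' with h | h
    · exact hpinj a.val b.val h b.isLt hab
    · exact hpinj b.val a.val h a.isLt hab.symm
  set π : Fin n ≃ Fin n := Equiv.ofBijective q (Finite.injective_iff_bijective.mp hqinj) with hπdef
  have hπk : ∀ k : Fin n, π k = p k.val := fun k => rfl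
  refine ⟨π, M, ?_, hMs⟩
  intro k j hj
  have hiA : M.symm j ∈ A k.val := by
    rw [hAmem]
    intro t ht h
    have ht' : t < n := ht.trans k.isLt
    have : M (π ⟨t, ht'⟩) ≠ j := hj ⟨t, ht'⟩ (by exact ht)
    apply this
    rw [hπk]
    show M (p t) = j
    rw [h]
    exact M.apply_symm_apply j
  have := (hnxt_spec (A k.val) (hAne k.val k.isLt)).2 (M.symm j) hiA
  rw [hπk]
  show r (p k.val) (M (p k.val)) ≤ r (p k.val) j
  calc r (p k.val) (M (p k.val)) ≤ r (p k.val) (M (M.symm j)) := this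
    _ = r (p k.val) j := by rw [M.apply_symm_apply]
end

section
/- For every n ≥ 1, every nonnegative weight function w and every ranking profile r consistent with w, if an action sequence π is welfare-optimal (i.e. SW(π) ≥ SW(σ) for every action sequence σ), then the matching induced by π via serial dictatorship is a maximum-weight perfect matching: w(M(π)) = max over perfect matchings M of w(M). -/
/-- Key lemma: if `M'` is a maximum-weight matching minimizing the total rank
potential among maximum-weight matchings, then in every nonempty set of agents
there is an agent who ranks his own `M'`-item at least as well as the
`M'`-item of any agent in the set. -/
lemma exists_top_agent {n : ℕ} (w : Fin n → Fin n → ℝ)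
    (r : Fin n → (Fin n ≃ Fin n))
    (hc : ∀ i j₁ j₂, w i j₁ > w i j₂ → r i j₁ < r i j₂)
    (M' : Fin n ≃ Fin n)
    (hmax : ∀ M'' : Fin n ≃ Fin n, ∑ i, w i (M'' i) ≤ ∑ i, w i (M' i))
    (hmin : ∀ M'' : Fin n ≃ Fin n, (∑ i, w i (M'' i) = ∑ i, w i (M' i)) →
      (∑ i, ((r i (M' i) : ℕ))) ≤ ∑ i, ((r i (M'' i) : ℕ)))
    (S : Finset (Fin n)) (hS : S.Nonempty) :
    ∃ i ∈ S, ∀ i' ∈ S, r i (M' i) ≤ r i (M' i') := by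
  by_contra hcon
  push_neg at hcon
  -- hcon : ∀ i ∈ S, ∃ i' ∈ S, r i (M' i') < r i (M' i)
  choose f hfS hflt using hcon
  classical
  set g0 : Fin n → Fin n := fun i => if h : i ∈ S then f i h else i with hg0
  have hg0S : ∀ i ∈ S, g0 i ∈ S := by
    intro i hi; simp only [hg0, dif_pos hi]; exact hfS i hi
  have hg0lt : ∀ i ∈ S, r i (M' (g0 i)) < r i (M' i) := by
    intro i hi; simp only [hg0, dif_pos hi]; exact hflt i hi
  obtain ⟨x, hx⟩ := hS
  have hiterS : ∀ k : ℕ, g0^[k] x ∈ S := by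
    intro k
    induction k with
    | zero => simpa using hx
    | succ k ih =>
      rw [Function.iterate_succ_apply']
      exact hg0S _ ih
  obtain ⟨a, b, hab, heqab⟩ :=
    Finite.exists_ne_map_eq_of_infinite (fun k : ℕ => g0^[k] x)
  wlog hlt : a < b generalizing a b
  · exact this b a hab.symm heqab.symm (by omega)
  set y : Fin n := g0^[a] x with hy
  set m : ℕ := b - a with hm
  have hm1 : 1 ≤ m := by omega
  have hper : g0^[m] y = y := by
    simp only [hy, hm, ← Function.iterate_add_apply]
    have : b - a + a = b := by omega
    rw [this]; exact heqab.symm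
  set C : Finset (Fin n) := (Finset.range m).image (fun k => g0^[k] y) with hC
  have hyC : y ∈ C := by
    simp only [hC, Finset.mem_image]
    exact ⟨0, Finset.mem_range.2 (by omega), rfl⟩
  have hCS : ∀ z ∈ C, z ∈ S := by
    intro z hz
    simp only [hC, Finset.mem_image] at hz
    obtain ⟨k, -, rfl⟩ := hz
    simpa only [hy, ← Function.iterate_add_apply] using hiterS (k + a)
  have hmaps : ∀ z ∈ C, g0 z ∈ C := by
    intro z hz
    simp only [hC, Finset.mem_image, Finset.mem_range] at hz ⊢
    obtain ⟨k, hk, rfl⟩ := hz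
    rcases eq_or_lt_of_le (Nat.succ_le_of_lt hk) with h | h
    · exact ⟨0, by omega, by
        rw [← Function.iterate_succ_apply' g0 k y, h, hper]; rfl⟩
    · exact ⟨k + 1, by omega, Function.iterate_succ_apply' g0 k y⟩
  have hsurj : ∀ z ∈ C, ∃ z' ∈ C, g0 z' = z := by
    intro z hz
    simp only [hC, Finset.mem_image, Finset.mem_range] at hz ⊢
    obtain ⟨k, hk, rfl⟩ := hz
    rcases Nat.eq_zero_or_pos k with rfl | hk0
    · exact ⟨g0^[m-1] y, ⟨m - 1, by omega, rfl⟩, by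
        rw [← Function.iterate_succ_apply' g0 (m-1) y, Nat.succ_eq_add_one,
          show m - 1 + 1 = m by omega, hper]; rfl⟩
    · exact ⟨g0^[k-1] y, ⟨k - 1, by omega, rfl⟩, by
        rw [← Function.iterate_succ_apply' g0 (k-1) y]
        congr 1; omega⟩
  -- g0 is injective on C
  have himg : C.image g0 = C := by
    apply Finset.Subset.antisymm
    · intro z hz
      simp only [Finset.mem_image] at hz
      obtain ⟨c, hcC, rfl⟩ := hz
      exact hmaps c hcC
    · intro z hz
      obtain ⟨z', hz', rfl⟩ := hsurj z hz
      exact Finset.mem_image_of_mem _ hz'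
  have hinjC : ∀ a' ∈ C, ∀ b' ∈ C, g0 a' = g0 b' → a' = b' := by
    have h := Finset.injOn_of_card_image_eq (s := C) (f := g0) (by rw [himg])
    exact fun a' ha' b' hb' hab' => h (Finset.mem_coe.2 ha') (Finset.mem_coe.2 hb') hab'
  set g : Fin n → Fin n := fun z => if z ∈ C then g0 z else z with hg
  have hginj : Function.Injective g := by
    intro p q hpq
    simp only [hg] at hpq
    by_cases hp : p ∈ C <;> by_cases hq : q ∈ C
    · rw [if_pos hp, if_pos hq] at hpq; exact hinjC p hp q hq hpq
    · rw [if_pos hp, if_neg hq] at hpq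
      exact absurd (hpq ▸ hmaps p hp) hq
    · rw [if_neg hp, if_pos hq] at hpq
      exact absurd (hpq.symm ▸ hmaps q hq) hp
    · rwa [if_neg hp, if_neg hq] at hpq
  set e : Fin n ≃ Fin n := Equiv.ofBijective g (Finite.injective_iff_bijective.mp hginj)
    with he
  have hee : ∀ z, e z = g z := fun z => rfl
  set M'' : Fin n ≃ Fin n := e.trans M' with hM''
  have hM''app : ∀ z, M'' z = M' (g z) := fun z => rfl
  have hterm : ∀ i, w i (M' i) ≤ w i (M'' i) := by
    intro i
    rw [hM''app]
    by_cases hi : i ∈ C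
    · simp only [hg, if_pos hi]
      by_contra hlt'
      push_neg at hlt'
      exact absurd (hc i (M' i) (M' (g0 i)) hlt') (asymm (hg0lt i (hCS i hi)))
    · simp only [hg, if_neg hi]
      exact le_refl _
  have hsum : ∑ i, w i (M' i) ≤ ∑ i, w i (M'' i) :=
    Finset.sum_le_sum (fun i _ => hterm i)
  have heqw : ∑ i, w i (M'' i) = ∑ i, w i (M' i) := le_antisymm (hmax M'') hsum
  have hphi : ∑ i, ((r i (M'' i) : ℕ)) < ∑ i, ((r i (M' i) : ℕ)) := by
    apply Finset.sum_lt_sum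
    · intro i _
      rw [hM''app]
      by_cases hi : i ∈ C
      · simp only [hg, if_pos hi]
        exact Nat.le_of_lt (hg0lt i (hCS i hi))
      · simp only [hg, if_neg hi]
        exact le_refl _
    · refine ⟨y, Finset.mem_univ _, ?_⟩
      rw [hM''app]
      simp only [hg, if_pos hyC]
      exact hg0lt y (hCS y hyC)
  exact absurd (hmin M'' heqw) (by omega)

/-- From the key lemma, build an ordering of any set of agents such that each
agent ranks his own item at least as well as the items of all later agents. -/
lemma exists_good_list {n : ℕ} (r : Fin n → (Fin n ≃ Fin n)) (M' : Fin n ≃ Fin n)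
    (key : ∀ S : Finset (Fin n), S.Nonempty →
      ∃ i ∈ S, ∀ i' ∈ S, r i (M' i) ≤ r i (M' i')) :
    ∀ S : Finset (Fin n), ∃ l : List (Fin n), l.Nodup ∧ (∀ a, a ∈ l ↔ a ∈ S) ∧
      l.Pairwise (fun a b => r a (M' a) ≤ r a (M' b)) := by
  classical
  intro S
  induction S using Finset.strongInduction with
  | _ S ih =>
    rcases S.eq_empty_or_nonempty with rfl | hS
    · exact ⟨[], by simp⟩
    · obtain ⟨i, hiS, hi⟩ := key S hS
      obtain ⟨l, hnd, hmem, hpw⟩ := ih (S.erase i) (Finset.erase_ssubset hiS)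
      refine ⟨i :: l, ?_, ?_, ?_⟩
      · refine List.nodup_cons.2 ⟨fun h => ?_, hnd⟩
        exact absurd ((hmem i).1 h) (by simp)
      · intro a
        simp only [List.mem_cons, hmem, Finset.mem_erase]
        constructor
        · rintro (rfl | ⟨-, h⟩) <;> [exact hiS; exact h]
        · intro h
          rcases eq_or_ne a i with rfl | hne
          · exact Or.inl rfl
          · exact Or.inr ⟨hne, h⟩
      · refine List.pairwise_cons.2 ⟨fun b hb => ?_, hpw⟩
        exact hi b (Finset.mem_of_mem_erase ((hmem b).1 hb))

/-- A welfare-optimal action sequence induces a maximum-weight perfect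
matching. -/
theorem welfare_optimal_induces_max_weight_matching
    (n : ℕ) (hn : 1 ≤ n)
    (w : Fin n → Fin n → ℝ) (hw : ∀ i j, 0 ≤ w i j)
    (r : Fin n → (Fin n ≃ Fin n))
    (hc : ∀ i j₁ j₂, w i j₁ > w i j₂ → r i j₁ < r i j₂)
    (π Mπ : Fin n ≃ Fin n) (hπ : IsSDMatching r π Mπ)
    (hopt : ∀ σ Mσ : Fin n ≃ Fin n, IsSDMatching r σ Mσ →
      ∑ i, w i (Mσ i) ≤ ∑ i, w i (Mπ i)) :
    (∑ i, w i (Mπ i)) =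
      (Finset.univ : Finset (Fin n ≃ Fin n)).sup'
        ⟨Equiv.refl (Fin n), Finset.mem_univ _⟩
        (fun M'' => ∑ i, w i (M'' i)) := by
  classical
  set ne : (Finset.univ : Finset (Fin n ≃ Fin n)).Nonempty :=
    ⟨Equiv.refl (Fin n), Finset.mem_univ _⟩ with hne
  set W : (Fin n ≃ Fin n) → ℝ := fun M => ∑ i, w i (M i) with hW
  set sup := (Finset.univ : Finset (Fin n ≃ Fin n)).sup' ne W with hsup
  -- the set of maximum-weight matchings
  set T : Finset (Fin n ≃ Fin n) := Finset.univ.filter (fun M => W M = sup) with hT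
  have hTne : T.Nonempty := by
    obtain ⟨M₀, -, hM₀⟩ := Finset.exists_mem_eq_sup' ne W
    exact ⟨M₀, Finset.mem_filter.2 ⟨Finset.mem_univ _, hM₀.symm⟩⟩
  obtain ⟨M', hM'T, hM'min⟩ :=
    Finset.exists_min_image T (fun M => ∑ i, ((r i (M i) : ℕ))) hTne
  have hM'w : W M' = sup := (Finset.mem_filter.1 hM'T).2
  have hmax : ∀ M'' : Fin n ≃ Fin n, ∑ i, w i (M'' i) ≤ ∑ i, w i (M' i) := by
    intro M''
    have := Finset.le_sup' W (Finset.mem_univ M'')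
    rw [← hsup] at this
    calc ∑ i, w i (M'' i) = W M'' := rfl
      _ ≤ sup := this
      _ = W M' := hM'w.symm
  have hmin : ∀ M'' : Fin n ≃ Fin n, (∑ i, w i (M'' i) = ∑ i, w i (M' i)) →
      (∑ i, ((r i (M' i) : ℕ))) ≤ ∑ i, ((r i (M'' i) : ℕ)) := by
    intro M'' h
    apply hM'min
    refine Finset.mem_filter.2 ⟨Finset.mem_univ _, ?_⟩
    show W M'' = sup
    rw [show W M'' = W M' from h, hM'w]
  have key := exists_top_agent w r hc M' hmax hmin
  obtain ⟨l, hnd, hmem, hpw⟩ := exists_good_list r M' key Finset.univ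
  have hlenl : l.length = n := by
    have h1 : l.toFinset = Finset.univ := by
      ext a; simp [hmem]
    have h2 := List.toFinset_card_of_nodup hnd
    rw [h1] at h2
    simpa using h2.symm
  set σ : Fin n ≃ Fin n :=
    (finCongr hlenl.symm).trans
      (hnd.getEquivOfForallMemList l (fun a => (hmem a).2 (Finset.mem_univ a))) with hσ
  have hσapp : ∀ k : Fin n, σ k = l.get (finCongr hlenl.symm k) := fun k => rfl
  have hSD : IsSDMatching r σ M' := by
    intro k j hj
    obtain ⟨s, hs⟩ := σ.surjective (M'.symm j)
    have hjs : M' (σ s) = j := by rw [hs]; simp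
    have hks : k ≤ s := by
      by_contra h
      push_neg at h
      exact hj s h hjs
    rcases eq_or_lt_of_le hks with rfl | hlt
    · rw [hjs]
    · have := List.pairwise_iff_get.1 hpw (finCongr hlenl.symm k) (finCongr hlenl.symm s)
        (by simpa using hlt)
      rw [← hσapp, ← hσapp] at this
      rw [← hjs]
      exact this
  have h1 : W M' ≤ W Mπ := hopt σ M' hSD
  have h2 : W Mπ ≤ sup := by
    have := Finset.le_sup' W (Finset.mem_univ Mπ)
    rwa [← hsup] at this
  have : W Mπ = sup := le_antisymm h2 (by rw [← hM'w]; exact h1)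
  exact this
end

section
/- Let w be a nonnegative weight function with ranking profile r consistent with w, and let w', r', E* be a proxy setting for (w, r). Suppose E* contains at least one perfect matching, let W* be the maximum of w'(M) over perfect matchings M within E*, and let W' be the maximum of w'(M) over all perfect matchings. If W* = W', then there exists an action sequence π such that SW(π) = W' and π is welfare-optimal with respect to (w, r) (i.e. SW(π) ≥ SW(σ) for every action sequence σ). -/
lemma exists_good_list_s2 {n : ℕ} (d : Fin n) (r : Fin n → (Fin n ≃ Fin n)) (M : Fin n ≃ Fin n)
    (sink : ∀ A : Finset (Fin n), A.Nonempty → ∃ i ∈ A, ∀ j ∈ A, r i (M i) ≤ r i (M j)) :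
    ∀ (N : ℕ) (A : Finset (Fin n)), A.card ≤ N → ∃ l : List (Fin n), l.Nodup ∧ l.toFinset = A ∧
      ∀ k : ℕ, k < l.length → ∀ i ∈ A, (∀ t, t < k → l.getD t d ≠ i) →
        r (l.getD k d) (M (l.getD k d)) ≤ r (l.getD k d) (M i) := by
  intro N
  induction N with
  | zero =>
    intro A hA
    refine ⟨[], by simp, by simpa using (Finset.card_eq_zero.mp (Nat.le_zero.mp hA)).symm, ?_⟩
    intro k hk; simp at hk
  | succ N ih =>
    intro A hA
    rcases A.eq_empty_or_nonempty with h | h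
    · exact ⟨[], by simp, by simp [h], by intro k hk; simp at hk⟩
    · obtain ⟨i, hi, hmin⟩ := sink A h
      obtain ⟨l', hnd, htf, hprop⟩ := ih (A.erase i)
        (by have := Finset.card_erase_of_mem hi; omega)
      refine ⟨i :: l', ?_, ?_, ?_⟩
      · refine List.nodup_cons.mpr ⟨?_, hnd⟩
        intro hmem
        have : i ∈ A.erase i := htf ▸ List.mem_toFinset.mpr hmem
        simp at this
      · rw [List.toFinset_cons, htf, Finset.insert_erase hi]
      · intro k hk j hj hne
        cases k with
        | zero => simpa using hmin j hj
        | succ k =>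
          have h0 : (i :: l').getD 0 d = i := rfl
          have hji : j ≠ i := fun h => hne 0 (Nat.succ_pos k) (by rw [h0, h])
          have hj' : j ∈ A.erase i := Finset.mem_erase.mpr ⟨hji, hj⟩
          have hk' : k < l'.length := by simpa using hk
          have := hprop k hk' j hj' (fun t ht => by
            have := hne (t+1) (Nat.succ_lt_succ ht)
            simpa using this)
          simpa using this

lemma sink_lemma {n : ℕ} (w : Fin n → Fin n → ℝ) (r : Fin n → (Fin n ≃ Fin n))
    (hc : ∀ i j₁ j₂, w i j₁ > w i j₂ → r i j₁ < r i j₂)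
    (W' : ℝ) (hub : ∀ N : Fin n ≃ Fin n, ∑ i, w i (N i) ≤ W')
    (M : Fin n ≃ Fin n) (hM : ∑ i, w i (M i) = W')
    (hmin : ∀ N : Fin n ≃ Fin n, ∑ i, w i (N i) = W' →
      ∑ i, ((r i (M i) : ℕ)) ≤ ∑ i, ((r i (N i) : ℕ))) :
    ∀ A : Finset (Fin n), A.Nonempty → ∃ i ∈ A, ∀ j ∈ A, r i (M i) ≤ r i (M j) := by
  intro A hA
  by_contra hcon
  push_neg at hcon
  -- a strictly improving map f on A
  have hcon' : ∀ i ∈ A, ∃ j ∈ A, r i (M j) < r i (M i) := hcon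
  set f : Fin n → Fin n := fun i => if h : i ∈ A then (hcon' i h).choose else i with hfdef
  have hf1 : ∀ i ∈ A, f i ∈ A := by
    intro i hi; simp only [hfdef, dif_pos hi]; exact (hcon' i hi).choose_spec.1
  have hf2 : ∀ i ∈ A, r i (M (f i)) < r i (M i) := by
    intro i hi; simp only [hfdef, dif_pos hi]; exact (hcon' i hi).choose_spec.2
  obtain ⟨a, ha⟩ := hA
  have hiter : ∀ k, f^[k] a ∈ A := by
    intro k
    induction k with
    | zero => exact ha
    | succ k ih => rw [Function.iterate_succ_apply']; exact hf1 _ ih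
  -- find a periodic point
  obtain ⟨x, y, hxy, heq⟩ := Finite.exists_ne_map_eq_of_infinite (fun k : ℕ => f^[k] a)
  have key : ∃ u m : ℕ, 0 < m ∧ f^[m] (f^[u] a) = f^[u] a := by
    rcases Nat.lt_or_ge x y with h | h
    · exact ⟨x, y - x, by omega, by
        rw [← Function.iterate_add_apply]
        have : y - x + x = y := by omega
        rw [this]; exact heq.symm⟩
    · exact ⟨y, x - y, by omega, by
        rw [← Function.iterate_add_apply]
        have : x - y + y = x := by omega
        rw [this]; exact heq⟩
  obtain ⟨u, m, hm, hper⟩ := key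
  set i0 : Fin n := f^[u] a with hi0
  set O : Finset (Fin n) := (Finset.range m).image (fun t => f^[t] i0) with hO
  have hi0O : i0 ∈ O := Finset.mem_image.mpr ⟨0, Finset.mem_range.mpr hm, rfl⟩
  have hOA : ∀ x ∈ O, x ∈ A := by
    intro x hx
    obtain ⟨t, _, rfl⟩ := Finset.mem_image.mp hx
    rw [hi0, ← Function.iterate_add_apply]; exact hiter _
  have hsurjO : ∀ x ∈ O, ∃ y ∈ O, f y = x := by
    intro x hx
    obtain ⟨t, ht, rfl⟩ := Finset.mem_image.mp hx
    rw [Finset.mem_range] at ht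
    cases t with
    | zero =>
      refine ⟨f^[m-1] i0, Finset.mem_image.mpr ⟨m-1, Finset.mem_range.mpr (by omega), rfl⟩, ?_⟩
      have h1 : f (f^[m-1] i0) = f^[m-1+1] i0 := (Function.iterate_succ_apply' f (m-1) i0).symm
      have h2 : m - 1 + 1 = m := by omega
      rw [h1, h2, hper]; rfl
    | succ s =>
      refine ⟨f^[s] i0, Finset.mem_image.mpr ⟨s, Finset.mem_range.mpr (by omega), rfl⟩, ?_⟩
      exact (Function.iterate_succ_apply' f s i0).symm
  set g0 : Fin n → Fin n := fun x => if x ∈ O then f x else x with hg0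
  have hg0surj : Function.Surjective g0 := by
    intro x
    by_cases hx : x ∈ O
    · obtain ⟨y, hy, hfy⟩ := hsurjO x hx
      exact ⟨y, by simp [hg0, hy, hfy]⟩
    · exact ⟨x, by simp [hg0, hx]⟩
  have hg0bij : Function.Bijective g0 := Finite.surjective_iff_bijective.mp hg0surj
  set N : Fin n ≃ Fin n := (Equiv.ofBijective g0 hg0bij).trans M with hNdef
  have hNap : ∀ x, N x = M (g0 x) := fun x => rfl
  have hwge : ∀ x, w x (M x) ≤ w x (M (g0 x)) := by
    intro x
    by_cases hx : x ∈ O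
    · simp only [hg0, if_pos hx]
      by_contra hgt
      push_neg at hgt
      exact absurd (hc x (M x) (M (f x)) hgt) (lt_asymm (hf2 x (hOA x hx)))
    · simp [hg0, hx]
  have hNsum : ∑ x, w x (N x) = W' := by
    refine le_antisymm (hub N) ?_
    calc W' = ∑ x, w x (M x) := hM.symm
    _ ≤ ∑ x, w x (N x) := Finset.sum_le_sum (fun x _ => (hNap x) ▸ hwge x)
  have hrlt : ∑ x, ((r x (N x) : ℕ)) < ∑ x, ((r x (M x) : ℕ)) := by
    refine Finset.sum_lt_sum (fun x _ => ?_) ⟨i0, Finset.mem_univ i0, ?_⟩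
    · rw [hNap]
      by_cases hx : x ∈ O
      · simp only [hg0, if_pos hx]
        exact le_of_lt (hf2 x (hOA x hx))
      · simp [hg0, hx]
    · rw [hNap]
      simp only [hg0, if_pos hi0O]
      exact hf2 i0 (hOA i0 hi0O)
  exact absurd (hmin N hNsum) (not_le.mpr hrlt)

/-- In a proxy setting, if the maximum proxy weight of a matching within the
known edges `E*` equals the maximum proxy weight over all matchings, then some
action sequence achieves this value as social welfare and is welfare-optimal
with respect to the true weights. -/
theorem proxy_equality_gives_welfare_optimal_sequence
    (n : ℕ) (hn : 1 ≤ n)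
    (w : Fin n → Fin n → ℝ) (hw : ∀ i j, 0 ≤ w i j)
    (r : Fin n → (Fin n ≃ Fin n))
    (hc : ∀ i j₁ j₂, w i j₁ > w i j₂ → r i j₁ < r i j₂)
    (w' : Fin n → Fin n → ℝ)
    (r' : Fin n → (Fin n ≃ Fin n))
    (hc' : ∀ i j₁ j₂, w' i j₁ > w' i j₂ → r' i j₁ < r' i j₂)
    (Estar : Set (Fin n × Fin n))
    (hEeq : ∀ i j, (i, j) ∈ Estar → w' i j = w i j)
    (hEge : ∀ i j, w i j ≤ w' i j)
    (hEpm : ∃ M : Fin n ≃ Fin n, ∀ i, (i, M i) ∈ Estar)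
    (Wstar W' : ℝ)
    (hWstar : IsGreatest
      {x : ℝ | ∃ M : Fin n ≃ Fin n, (∀ i, (i, M i) ∈ Estar) ∧ x = ∑ i, w' i (M i)} Wstar)
    (hW' : IsGreatest {x : ℝ | ∃ M : Fin n ≃ Fin n, x = ∑ i, w' i (M i)} W')
    (hEq : Wstar = W') :
    ∃ π Mπ : Fin n ≃ Fin n, IsSDMatching r π Mπ ∧
      (∑ i, w i (Mπ i)) = W' ∧
      ∀ σ Mσ : Fin n ≃ Fin n, IsSDMatching r σ Mσ →
        ∑ i, w i (Mσ i) ≤ ∑ i, w i (Mπ i) := by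
  obtain ⟨M₀, hM₀E, hM₀w⟩ := hWstar.1
  have hub : ∀ N : Fin n ≃ Fin n, ∑ i, w i (N i) ≤ W' := fun N =>
    le_trans (Finset.sum_le_sum fun i _ => hEge i (N i)) (hW'.2 ⟨N, rfl⟩)
  have hM₀ : ∑ i, w i (M₀ i) = W' := by
    rw [← hEq, hM₀w]
    exact Finset.sum_congr rfl fun i _ => (hEeq i (M₀ i) (hM₀E i)).symm
  set Sc := {c : ℕ | ∃ N : Fin n ≃ Fin n, ∑ i, w i (N i) = W' ∧ ∑ i, ((r i (N i) : ℕ)) = c}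
    with hSc
  have hne : Sc.Nonempty := ⟨_, M₀, hM₀, rfl⟩
  obtain ⟨M, hMw, hMc⟩ := Nat.sInf_mem hne
  have hmin : ∀ N : Fin n ≃ Fin n, ∑ i, w i (N i) = W' →
      ∑ i, ((r i (M i) : ℕ)) ≤ ∑ i, ((r i (N i) : ℕ)) := by
    intro N hN
    rw [hMc]
    exact Nat.sInf_le ⟨N, hN, rfl⟩
  have sink := sink_lemma w r hc W' hub M hMw hmin
  set d : Fin n := ⟨0, hn⟩ with hd
  obtain ⟨l, hnd, htf, hprop⟩ := exists_good_list_s2 d r M sink n Finset.univ (by simp)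
  have hlen : l.length = n := by
    have := List.toFinset_card_of_nodup hnd
    rw [htf] at this
    simpa using this.symm
  set π₀ : Fin n → Fin n := fun k => l.getD k.val d with hπ₀
  have hgd : ∀ k : ℕ, (hk : k < l.length) → l.getD k d = l.get ⟨k, hk⟩ := fun k hk =>
    List.getD_eq_get l d ⟨k, hk⟩
  have hinj : Function.Injective π₀ := by
    intro k k' hkk
    have hk : (k : ℕ) < l.length := by rw [hlen]; exact k.isLt
    have hk' : (k' : ℕ) < l.length := by rw [hlen]; exact k'.isLt
    rw [hπ₀] at hkk
    simp only [hgd _ hk, hgd _ hk'] at hkk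
    have h2 : (⟨(k:ℕ), hk⟩ : Fin l.length) = ⟨(k':ℕ), hk'⟩ := (List.Nodup.get_inj_iff hnd).mp hkk
    simp only [Fin.mk.injEq] at h2
    exact Fin.ext h2
  set π : Fin n ≃ Fin n := Equiv.ofBijective π₀ (Finite.injective_iff_bijective.mp hinj)
    with hπ
  have hπap : ∀ k : Fin n, π k = l.getD k.val d := fun k => rfl
  refine ⟨π, M, ?_, hMw, ?_⟩
  · intro k j hj
    set i : Fin n := M.symm j with hi
    have hMi : M i = j := M.apply_symm_apply j
    have key := hprop k.val (by rw [hlen]; exact k.isLt) i (Finset.mem_univ i) ?_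
    · rw [← hMi]
      calc r (π k) (M (π k)) = r (l.getD k.val d) (M (l.getD k.val d)) := by rw [hπap]
      _ ≤ r (l.getD k.val d) (M i) := key
      _ = r (π k) (M i) := by rw [hπap]
    · intro t ht hEq2
      have ht' : t < n := lt_trans ht k.isLt
      have : M (π ⟨t, ht'⟩) ≠ j := hj ⟨t, ht'⟩ (by simpa [Fin.lt_def] using ht)
      apply this
      rw [hπap, hEq2, hMi]
  · intro σ Mσ _
    rw [hMw]
    exact hub Mσ
end

section
/- Let w be a nonnegative weight function with ranking profile r consistent with w, and let w', r', E* be a proxy setting for (w, r). Let M* be a perfect matching within E* maximizing w'-weight among perfect matchings within E*, let M' be a perfect matching maximizing w'-weight among all perfect matchings, and let π be an action sequence such that SW(π) = w'(M') = w'(M*). Then π is welfare-optimal with respect to (w, r): SW(σ) ≤ SW(π) for every action sequence σ; moreover SW(π) = max over perfect matchings M of w(M). -/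
/-- Condition of welfare-optimality: if `SW(π) = w'(M') = w'(M*)` in a proxy
setting, then `π` is welfare-optimal with respect to the true weights, and its
social welfare is the maximum true weight of a perfect matching. -/
theorem welfare_optimality_condition
    (n : ℕ) (hn : 1 ≤ n)
    (w : Fin n → Fin n → ℝ) (hw : ∀ i j, 0 ≤ w i j)
    (r : Fin n → (Fin n ≃ Fin n))
    (hc : ∀ i j₁ j₂, w i j₁ > w i j₂ → r i j₁ < r i j₂)
    (w' : Fin n → Fin n → ℝ)
    (r' : Fin n → (Fin n ≃ Fin n))
    (hc' : ∀ i j₁ j₂, w' i j₁ > w' i j₂ → r' i j₁ < r' i j₂)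
    (Estar : Set (Fin n × Fin n))
    (hEeq : ∀ i j, (i, j) ∈ Estar → w' i j = w i j)
    (hEge : ∀ i j, w i j ≤ w' i j)
    (Mstar : Fin n ≃ Fin n) (hMstarE : ∀ i, (i, Mstar i) ∈ Estar)
    (hMstar : ∀ M'' : Fin n ≃ Fin n, (∀ i, (i, M'' i) ∈ Estar) →
      ∑ i, w' i (M'' i) ≤ ∑ i, w' i (Mstar i))
    (M' : Fin n ≃ Fin n)
    (hM' : ∀ M'' : Fin n ≃ Fin n, ∑ i, w' i (M'' i) ≤ ∑ i, w' i (M' i))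
    (π Mπ : Fin n ≃ Fin n) (hπ : IsSDMatching r π Mπ)
    (hSW : (∑ i, w i (Mπ i)) = ∑ i, w' i (M' i))
    (hWeq : (∑ i, w' i (M' i)) = ∑ i, w' i (Mstar i)) :
    (∀ σ Mσ : Fin n ≃ Fin n, IsSDMatching r σ Mσ →
      ∑ i, w i (Mσ i) ≤ ∑ i, w i (Mπ i)) ∧
    (∑ i, w i (Mπ i)) =
      (Finset.univ : Finset (Fin n ≃ Fin n)).sup'
        ⟨Equiv.refl (Fin n), Finset.mem_univ _⟩
        (fun M'' => ∑ i, w i (M'' i)) := by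
  have key : ∀ M : Fin n ≃ Fin n, ∑ i, w i (M i) ≤ ∑ i, w i (Mπ i) := by
    intro M
    rw [hSW]
    calc ∑ i, w i (M i) ≤ ∑ i, w' i (M i) :=
          Finset.sum_le_sum fun i _ => hEge i (M i)
      _ ≤ ∑ i, w' i (M' i) := hM' M
  refine ⟨fun σ Mσ _ => key Mσ, le_antisymm ?_ ?_⟩
  · exact Finset.le_sup' (fun M'' => ∑ i, w i (M'' i)) (Finset.mem_univ Mπ)
  · exact Finset.sup'_le _ _ fun M _ => key M
end

section
/- Let w, w' : Fin n → Fin n → ℝ be weight functions and E* ⊆ Fin n × Fin n a set of edges such that w' i j = w i j whenever (i, j) ∈ E*, and w' i j ≥ w i j for every pair (i, j). Let M* be a perfect matching within E* maximizing w'-weight among perfect matchings within E*, and let M' be a perfect matching maximizing w'-weight among all perfect matchings. If w'(M') = w'(M*), then this common value equals the maximum over all perfect matchings M of the true weight w(M). -/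
/-- If the maximum proxy weight of a perfect matching within the known edges
`E*` equals the maximum proxy weight over all perfect matchings, then this
common value equals the maximum true weight of a perfect matching. -/
theorem proxy_equality_gives_true_optimum
    (n : ℕ) (hn : 1 ≤ n)
    (w w' : Fin n → Fin n → ℝ) (hw : ∀ i j, 0 ≤ w i j)
    (Estar : Set (Fin n × Fin n))
    (hEeq : ∀ i j, (i, j) ∈ Estar → w' i j = w i j)
    (hEge : ∀ i j, w i j ≤ w' i j)
    (Mstar : Fin n ≃ Fin n) (hMstarE : ∀ i, (i, Mstar i) ∈ Estar)
    (hMstar : ∀ M'' : Fin n ≃ Fin n, (∀ i, (i, M'' i) ∈ Estar) →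
      ∑ i, w' i (M'' i) ≤ ∑ i, w' i (Mstar i))
    (M' : Fin n ≃ Fin n)
    (hM' : ∀ M'' : Fin n ≃ Fin n, ∑ i, w' i (M'' i) ≤ ∑ i, w' i (M' i))
    (hEq : (∑ i, w' i (M' i)) = ∑ i, w' i (Mstar i)) :
    (∑ i, w' i (M' i)) =
      (Finset.univ : Finset (Fin n ≃ Fin n)).sup'
        ⟨Equiv.refl (Fin n), Finset.mem_univ _⟩
        (fun M'' => ∑ i, w i (M'' i)) := by
  have hstar : (∑ i, w' i (Mstar i)) = ∑ i, w i (Mstar i) :=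
    Finset.sum_congr rfl fun i _ => hEeq i (Mstar i) (hMstarE i)
  apply le_antisymm
  · rw [hEq, hstar]
    exact Finset.le_sup' (fun M'' => ∑ i, w i (M'' i)) (Finset.mem_univ Mstar)
  · apply Finset.sup'_le
    intro M'' _
    exact le_trans (Finset.sum_le_sum fun i _ => hEge i (M'' i)) (hM' M'')
end

section
/- Let w : Fin n → Fin n → ℝ be a weight function (n ≥ 1) and let M be a perfect matching of maximum weight, i.e. w(M) ≥ w(M'') for every perfect matching M''. Then there exists an agent i such that w i (M i) = max over items j of w i j, i.e. some agent is matched to one of her most valuable items. -/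
/-- In a maximum-weight perfect matching, some agent is matched to one of her
most valuable items. -/
theorem exists_agent_with_top_item
    (n : ℕ) (hn : 1 ≤ n)
    (w : Fin n → Fin n → ℝ)
    (M : Fin n ≃ Fin n)
    (hM : ∀ M'' : Fin n ≃ Fin n, ∑ i, w i (M'' i) ≤ ∑ i, w i (M i)) :
    ∃ i : Fin n, w i (M i) =
      (Finset.univ : Finset (Fin n)).sup' ⟨⟨0, hn⟩, Finset.mem_univ _⟩ (w i) := by
  by_contra hcon
  push_neg at hcon
  -- for each i choose a strictly better item b i
  have hb : ∀ i : Fin n, ∃ j : Fin n, w i (M i) < w i j ∧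
      (Finset.univ : Finset (Fin n)).sup' ⟨⟨0, hn⟩, Finset.mem_univ _⟩ (w i) = w i j := by
    intro i
    obtain ⟨j, -, hj⟩ := Finset.exists_mem_eq_sup' (⟨⟨0, hn⟩, Finset.mem_univ _⟩ :
      (Finset.univ : Finset (Fin n)).Nonempty) (w i)
    refine ⟨j, ?_, hj⟩
    have hle : w i (M i) ≤ (Finset.univ : Finset (Fin n)).sup'
        ⟨⟨0, hn⟩, Finset.mem_univ _⟩ (w i) :=
      Finset.le_sup' (w i) (Finset.mem_univ (M i))
    have := hcon i
    rw [hj] at hle this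
    exact lt_of_le_of_ne hle this
  choose b hblt hbsup using hb
  -- the function sending i to the agent who holds i's favorite item
  set f : Fin n → Fin n := fun i => M.symm (b i) with hf
  -- find a periodic point of f
  have hper : ∃ y : Fin n, y ∈ Function.periodicPts f := by
    have : ¬ Function.Injective (fun t : Fin (n + 1) => f^[(t : ℕ)] ⟨0, hn⟩) := by
      intro hinj
      have := Fintype.card_le_of_injective _ hinj
      simp at this
    rw [Function.not_injective_iff] at this
    obtain ⟨p, q, hpq, hne⟩ := this
    rcases lt_or_gt_of_ne (fun h => hne (Fin.ext h)) with h | h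
    · refine ⟨f^[(p : ℕ)] ⟨0, hn⟩, (q : ℕ) - p, by omega, ?_⟩
      show f^[(q : ℕ) - p] (f^[(p : ℕ)] _) = _
      rw [← Function.iterate_add_apply, Nat.sub_add_cancel h.le, hpq]
    · refine ⟨f^[(q : ℕ)] ⟨0, hn⟩, (p : ℕ) - q, by omega, ?_⟩
      show f^[(p : ℕ) - q] (f^[(q : ℕ)] _) = _
      rw [← Function.iterate_add_apply, Nat.sub_add_cancel h.le, hpq]
  obtain ⟨y, hy⟩ := hper
  set m := Function.minimalPeriod f y with hm
  have hmpos : 0 < m := Function.minimalPeriod_pos_of_mem_periodicPts hy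
  -- the cycle S
  set S : Finset (Fin n) := (Finset.range m).image (fun t => f^[t] y) with hS
  have hyS : y ∈ S := Finset.mem_image.2 ⟨0, Finset.mem_range.2 hmpos, rfl⟩
  have hfS : ∀ a ∈ S, f a ∈ S := by
    intro a ha
    obtain ⟨t, ht, rfl⟩ := Finset.mem_image.1 ha
    rw [Finset.mem_range] at ht
    have : f (f^[t] y) = f^[(t + 1) % m] y := by
      rw [hm, Function.iterate_mod_minimalPeriod_eq, Function.iterate_succ_apply']
    rw [this]
    exact Finset.mem_image.2 ⟨(t + 1) % m, Finset.mem_range.2 (Nat.mod_lt _ hmpos), rfl⟩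
  have hfinj : ∀ a ∈ S, ∀ c ∈ S, f a = f c → a = c := by
    intro a ha c hc hac
    obtain ⟨s, hs, rfl⟩ := Finset.mem_image.1 ha
    obtain ⟨t, ht, rfl⟩ := Finset.mem_image.1 hc
    rw [Finset.mem_range] at hs ht
    have h1 : f^[(s + 1) % m] y = f^[(t + 1) % m] y := by
      rw [hm, Function.iterate_mod_minimalPeriod_eq, Function.iterate_mod_minimalPeriod_eq,
        Function.iterate_succ_apply', Function.iterate_succ_apply']
      exact hac
    have h2 : (s + 1) % m = (t + 1) % m :=
      Function.iterate_injOn_Iio_minimalPeriod (Set.mem_Iio.2 (Nat.mod_lt _ hmpos))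
        (Set.mem_Iio.2 (Nat.mod_lt _ hmpos)) h1
    have : s = t := by
      simp only [hm] at hs ht h2
      rcases eq_or_lt_of_le (Nat.succ_le_of_lt hs) with h | h <;>
        rcases eq_or_lt_of_le (Nat.succ_le_of_lt ht) with h' | h'
      · omega
      · rw [Nat.succ_eq_add_one] at h h'
        rw [h, Nat.mod_self, Nat.mod_eq_of_lt h'] at h2; omega
      · rw [Nat.succ_eq_add_one] at h h'
        rw [h', Nat.mod_self, Nat.mod_eq_of_lt h] at h2; omega
      · rw [Nat.succ_eq_add_one] at h h'
        rw [Nat.mod_eq_of_lt h, Nat.mod_eq_of_lt h'] at h2; omega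
    rw [this]
  -- g: apply f on the cycle, identity elsewhere
  set g : Fin n → Fin n := fun a => if a ∈ S then f a else a with hg
  have hginj : Function.Injective g := by
    intro a c hac
    simp only [hg] at hac
    by_cases ha : a ∈ S <;> by_cases hc : c ∈ S <;> simp [ha, hc] at hac
    · exact hfinj a ha c hc hac
    · exact absurd (hac ▸ hfS a ha) hc
    · exact absurd (hac.symm ▸ hfS c hc) ha
    · exact hac
  have hgbij : Function.Bijective g := Finite.injective_iff_bijective.mp hginj
  set M' : Fin n ≃ Fin n := (Equiv.ofBijective g hgbij).trans M with hM'
  have hval : ∀ i : Fin n, w i (M' i) = if i ∈ S then w i (b i) else w i (M i) := by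
    intro i
    by_cases hi : i ∈ S
    · simp [hM', hg, hf, hi]
    · simp [hM', hg, hi]
  have hlt : ∑ i, w i (M i) < ∑ i, w i (M' i) := by
    apply Finset.sum_lt_sum
    · intro i _
      rw [hval i]
      by_cases hi : i ∈ S
      · rw [if_pos hi]; exact (hblt i).le
      · rw [if_neg hi]
    · exact ⟨y, Finset.mem_univ y, by rw [hval y, if_pos hyS]; exact hblt y⟩
  exact absurd (hM M') (not_le.2 hlt)
end

section
/- Let w'' : Fin n → Fin n → ℝ be a weight function and r' a ranking profile such that for every agent i and all items j₁, j₂: w'' i j₁ > w'' i j₂ if and only if r' i j₁ < r' i j₂ (so in particular j ↦ w'' i j is injective for every i). Then every perfect matching of maximum w''-weight is Pareto-optimal with respect to the rankings r'. -/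
/-- A perfect matching `M` is Pareto-optimal with respect to a ranking profile
`r`: no other matching weakly improves every agent's rank and strictly improves
some agent's rank. -/
def ParetoOptimal {n : ℕ} (r : Fin n → (Fin n ≃ Fin n)) (M : Fin n ≃ Fin n) : Prop :=
  ¬ ∃ M' : Fin n ≃ Fin n,
      (∀ i, r i (M' i) ≤ r i (M i)) ∧ (∃ i, r i (M' i) < r i (M i))

/-- If the strict order of a weight function `w''` coincides with the rank
order of `r'` for every agent, then every maximum `w''`-weight perfect matching
is Pareto-optimal with respect to `r'`. -/
theorem max_weight_matching_pareto_optimal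
    (n : ℕ) (hn : 1 ≤ n)
    (w'' : Fin n → Fin n → ℝ)
    (r' : Fin n → (Fin n ≃ Fin n))
    (hiff : ∀ i j₁ j₂, w'' i j₁ > w'' i j₂ ↔ r' i j₁ < r' i j₂)
    (M : Fin n ≃ Fin n)
    (hM : ∀ M'' : Fin n ≃ Fin n, ∑ i, w'' i (M'' i) ≤ ∑ i, w'' i (M i)) :
    ParetoOptimal r' M := by
  rintro ⟨M', hle, i₀, hlt⟩
  have hge : ∀ i, w'' i (M i) ≤ w'' i (M' i) := by
    intro i
    rcases lt_or_eq_of_le (hle i) with h | h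
    · exact le_of_lt ((hiff i (M' i) (M i)).mpr h)
    · have : M' i = M i := (r' i).injective h
      rw [this]
  have hst : w'' i₀ (M i₀) < w'' i₀ (M' i₀) := (hiff i₀ (M' i₀) (M i₀)).mpr hlt
  have : ∑ i, w'' i (M i) < ∑ i, w'' i (M' i) :=
    Finset.sum_lt_sum (fun i _ => hge i) ⟨i₀, Finset.mem_univ i₀, hst⟩
  exact absurd (hM M') (not_le.mpr this)
end

section
/- Let w' : Fin n → Fin n → ℝ be a weight function and r' a ranking profile consistent with w' (w' i j₁ > w' i j₂ implies r' i j₁ < r' i j₂). Then there exists a perfect matching M that simultaneously has maximum w'-weight among all perfect matchings and is Pareto-optimal with respect to r'. (That is, a maximum-weight Pareto-optimal matching always exists.) -/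
/-- A maximum-weight Pareto-optimal perfect matching always exists when the
rankings are consistent with the weights. -/
theorem exists_max_weight_pareto_optimal_matching
    (n : ℕ) (hn : 1 ≤ n)
    (w' : Fin n → Fin n → ℝ)
    (r' : Fin n → (Fin n ≃ Fin n))
    (hc' : ∀ i j₁ j₂, w' i j₁ > w' i j₂ → r' i j₁ < r' i j₂) :
    ∃ M : Fin n ≃ Fin n,
      (∀ M'' : Fin n ≃ Fin n, ∑ i, w' i (M'' i) ≤ ∑ i, w' i (M i)) ∧
      ParetoOptimal r' M := by
  classical
  set f : (Fin n ≃ Fin n) → ℝ := fun M => ∑ i, w' i (M i) with hf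
  set g : (Fin n ≃ Fin n) → ℕ := fun M => ∑ i, ((r' i (M i)) : ℕ) with hg
  obtain ⟨M₀, -, hM₀⟩ := Finset.exists_max_image (Finset.univ : Finset (Fin n ≃ Fin n)) f
    ⟨1, Finset.mem_univ 1⟩
  set S : Finset (Fin n ≃ Fin n) :=
    Finset.univ.filter (fun M => ∀ M', f M' ≤ f M) with hS
  have hM₀S : M₀ ∈ S := by
    simp only [hS, Finset.mem_filter, Finset.mem_univ, true_and]
    exact fun M' => hM₀ M' (Finset.mem_univ M')
  obtain ⟨M, hMS, hMmin⟩ := Finset.exists_min_image S g ⟨M₀, hM₀S⟩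
  have hMmax : ∀ M', f M' ≤ f M := by
    simp only [hS, Finset.mem_filter, Finset.mem_univ, true_and] at hMS
    exact hMS
  refine ⟨M, hMmax, ?_⟩
  rintro ⟨M', hle, i₀, hlt⟩
  -- each agent's weight weakly improves under M'
  have hw : ∀ i, w' i (M i) ≤ w' i (M' i) := by
    intro i
    by_contra h
    push_neg at h
    exact absurd (lt_of_le_of_lt (hle i) (hc' i (M i) (M' i) h)) (lt_irrefl _)
  have hfM' : f M ≤ f M' := Finset.sum_le_sum (fun i _ => hw i)
  have hM'S : M' ∈ S := by
    simp only [hS, Finset.mem_filter, Finset.mem_univ, true_and]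
    exact fun M'' => le_trans (hMmax M'') hfM'
  have hgM' : g M' < g M := by
    refine Finset.sum_lt_sum (fun i _ => by exact_mod_cast hle i)
      ⟨i₀, Finset.mem_univ i₀, by exact_mod_cast hlt⟩
  exact absurd (hMmin M' hM'S) (not_le.mpr hgM')
end

section
/- Let w be a nonnegative weight function with ranking profile r consistent with w. If a perfect matching M has maximum w-weight among all perfect matchings and is Pareto-optimal with respect to r, then there exists an action sequence π whose serial-dictatorship induced matching is exactly M, i.e. M(π) = M. -/
/-- Key lemma: in any nonempty subset of agents, some agent receives (under `M`)
his favorite among items owned by the subset. -/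
theorem pareto_key {n : ℕ} (r : Fin n → (Fin n ≃ Fin n)) (M : Fin n ≃ Fin n)
    (hpo : ParetoOptimal r M) (S : Finset (Fin n)) (hS : S.Nonempty) :
    ∃ i ∈ S, ∀ i' ∈ S, r i (M i) ≤ r i (M i') := by
  classical
  have hbest : ∀ i : Fin n, ∃ i' ∈ S, ∀ i'' ∈ S, r i (M i') ≤ r i (M i'') := fun i =>
    S.exists_min_image (fun i' => (r i (M i') : Fin n)) hS
  choose f hfS hfmin using hbest
  by_cases hfix : ∃ i ∈ S, f i = i
  · obtain ⟨i, hi, hfi⟩ := hfix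
    refine ⟨i, hi, fun i' hi' => ?_⟩
    have := hfmin i i' hi'
    rwa [hfi] at this
  · push_neg at hfix
    exfalso
    have hstrict : ∀ i ∈ S, r i (M (f i)) < r i (M i) := by
      intro i hi
      rcases lt_or_eq_of_le (hfmin i i hi) with h | h
      · exact h
      · exact absurd (M.injective ((r i).injective h)) (hfix i hi)
    obtain ⟨i₀, hi₀⟩ := hS
    -- all iterates of f stay in S
    have hiter : ∀ t : ℕ, f^[t] i₀ ∈ S := by
      intro t
      induction t with
      | zero => simpa using hi₀
      | succ t ih => rw [Function.iterate_succ_apply']; exact hfS _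
    have key : ∀ a b : ℕ, a < b → f^[a] i₀ = f^[b] i₀ → False := by
      intro a b hab heq
      set j := f^[a] i₀ with hj
      set m := b - a with hm
      have hm1 : 1 ≤ m := by omega
      have hperiod : f^[m] j = j := by
        have : f^[m] (f^[a] i₀) = f^[b] i₀ := by
          rw [← Function.iterate_add_apply]
          congr 1
          omega
        rw [hj, this, ← heq]
      -- the orbit of j
      set P : Fin n → Prop := fun x => ∃ t : ℕ, f^[t] j = x with hP
      have hPj : P j := ⟨0, rfl⟩
      have hPS : ∀ x, P x → x ∈ S := by
        rintro x ⟨t, rfl⟩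
        rw [hj, ← Function.iterate_add_apply]
        exact hiter _
      have hPf : ∀ x, P x → P (f x) := by
        rintro x ⟨t, rfl⟩
        exact ⟨t + 1, by rw [Function.iterate_succ_apply']⟩
      have hPper : ∀ x, P x → f^[m] x = x := by
        rintro x ⟨t, rfl⟩
        rw [← Function.iterate_add_apply, Nat.add_comm, Function.iterate_add_apply, hperiod]
      -- construct the trading permutation
      set g : Fin n → Fin n := fun x => if P x then f x else x with hg
      set g' : Fin n → Fin n := fun x => if P x then f^[m - 1] x else x with hg'
      have hP' : ∀ x, P x → P (f^[m-1] x) := by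
        rintro x ⟨t, rfl⟩
        exact ⟨m - 1 + t, by rw [Function.iterate_add_apply]⟩
      have hli : Function.LeftInverse g' g := by
        intro x
        by_cases hx : P x
        · have h1 : g x = f x := if_pos hx
          have h2 : P (f x) := hPf x hx
          rw [h1, hg']
          simp only [if_pos h2]
          have h3 := (Function.iterate_succ_apply f (m - 1) x).symm
          simp only [Nat.succ_eq_add_one, Nat.sub_add_cancel hm1] at h3
          rw [h3]
          exact hPper x hx
        · rw [hg, hg']
          simp only [if_neg hx]
      have hri : Function.RightInverse g' g := by
        intro x
        by_cases hx : P x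
        · have h1 : g' x = f^[m-1] x := if_pos hx
          have h2 : P (f^[m-1] x) := hP' x hx
          rw [h1, hg]
          simp only [if_pos h2]
          have h3 := (Function.iterate_succ_apply' f (m - 1) x).symm
          simp only [Nat.succ_eq_add_one, Nat.sub_add_cancel hm1] at h3
          rw [h3]
          exact hPper x hx
        · rw [hg, hg']
          simp only [if_neg hx]
      set σ : Fin n ≃ Fin n := ⟨g, g', hli, hri⟩ with hσ
      set M' : Fin n ≃ Fin n := σ.trans M with hM'
      apply hpo
      refine ⟨M', fun i => ?_, ⟨j, ?_⟩⟩
      · show r i (M (g i)) ≤ r i (M i)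
        by_cases hx : P i
        · rw [hg]; simp only [if_pos hx]
          exact le_of_lt (hstrict i (hPS i hx))
        · rw [hg]; simp only [if_neg hx]; exact le_refl _
      · show r j (M (g j)) < r j (M j)
        rw [hg]; simp only [if_pos hPj]
        exact hstrict j (hPS j hPj)
    obtain ⟨a, b, hab, heq⟩ :=
      Finite.exists_ne_map_eq_of_infinite (fun t : ℕ => f^[t] i₀)
    rcases lt_or_gt_of_ne hab with h | h
    · exact key a b h heq
    · exact key b a h heq.symm


/-- Build an ordering of any subset of agents such that each agent gets his
favorite among items of the agents from his position onwards. -/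
theorem pareto_list {n : ℕ} (r : Fin n → (Fin n ≃ Fin n)) (M : Fin n ≃ Fin n)
    (hpo : ParetoOptimal r M) :
    ∀ (N : ℕ) (S : Finset (Fin n)), S.card = N →
      ∃ L : List (Fin n), L.Nodup ∧ L.toFinset = S ∧
        ∀ (k : ℕ) (h : k < L.length), ∀ i' ∈ L.drop k,
          r (L.get ⟨k, h⟩) (M (L.get ⟨k, h⟩)) ≤ r (L.get ⟨k, h⟩) (M i') := by
  classical
  intro N
  induction N with
  | zero =>
    intro S hS
    refine ⟨[], by simp, by simpa using (Finset.card_eq_zero.mp hS).symm, ?_⟩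
    intro k h
    simp at h
  | succ N ih =>
    intro S hS
    have hSne : S.Nonempty := Finset.card_pos.mp (by omega)
    obtain ⟨i, hiS, hitop⟩ := pareto_key r M hpo S hSne
    obtain ⟨L', hnd', htf', hprop'⟩ := ih (S.erase i) (by rw [Finset.card_erase_of_mem hiS, hS]; rfl)
    refine ⟨i :: L', ?_, ?_, ?_⟩
    · refine List.nodup_cons.mpr ⟨?_, hnd'⟩
      intro hmem
      have : i ∈ S.erase i := htf' ▸ List.mem_toFinset.mpr hmem
      exact (Finset.mem_erase.mp this).1 rfl
    · rw [List.toFinset_cons, htf', Finset.insert_erase hiS]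
    · intro k h i' hi'
      match k with
      | 0 =>
        simp only [List.drop_zero] at hi'
        have hi'S : i' ∈ S := by
          rw [← Finset.insert_erase hiS, ← htf']
          simpa using hi'
        simpa using hitop i' hi'S
      | k + 1 =>
        have h' : k < L'.length := by simpa using h
        have hg : (i :: L').get ⟨k + 1, h⟩ = L'.get ⟨k, h'⟩ := rfl
        have hd : (i :: L').drop (k + 1) = L'.drop k := rfl
        rw [hg]
        exact hprop' k h' i' (hd ▸ hi')

/-- Every maximum-weight Pareto-optimal perfect matching is induced by some
action sequence via serial dictatorship. -/
theorem max_weight_pareto_optimal_has_action_sequence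
    (n : ℕ) (hn : 1 ≤ n)
    (w : Fin n → Fin n → ℝ) (hw : ∀ i j, 0 ≤ w i j)
    (r : Fin n → (Fin n ≃ Fin n))
    (hc : ∀ i j₁ j₂, w i j₁ > w i j₂ → r i j₁ < r i j₂)
    (M : Fin n ≃ Fin n)
    (hmax : ∀ M'' : Fin n ≃ Fin n, ∑ i, w i (M'' i) ≤ ∑ i, w i (M i))
    (hpo : ParetoOptimal r M) :
    ∃ π : Fin n ≃ Fin n, IsSDMatching r π M := by
  classical
  obtain ⟨L, hnd, htf, hprop⟩ := pareto_list r M hpo (Finset.univ.card) Finset.univ rfl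
  have hlen : L.length = n := by
    have := List.toFinset_card_of_nodup hnd
    rw [htf] at this
    simpa using this.symm
  have hgetinj : Function.Injective L.get := List.nodup_iff_injective_get.mp hnd
  set φ : Fin n → Fin n := fun k => L.get ⟨k.1, by omega⟩ with hφ
  have hφinj : Function.Injective φ := by
    intro a b hab
    have := hgetinj hab
    exact Fin.ext (by simpa using congrArg Fin.val this)
  set π : Fin n ≃ Fin n := Equiv.ofBijective φ (Finite.injective_iff_bijective.mp hφinj) with hπ
  refine ⟨π, ?_⟩
  intro k j hj
  set i' : Fin n := M.symm j with hi'
  have hji' : M i' = j := M.apply_symm_apply j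
  have hi'L : i' ∈ L := by
    rw [← List.mem_toFinset, htf]; exact Finset.mem_univ i'
  obtain ⟨⟨s, hs⟩, hsget⟩ := List.get_of_mem hi'L
  have hks : (k : ℕ) ≤ s := by
    by_contra hlt
    push_neg at hlt
    have hsn : s < n := by omega
    have : M (π ⟨s, hsn⟩) = j := by
      have : π ⟨s, hsn⟩ = i' := by
        show φ ⟨s, hsn⟩ = i'
        rw [hφ, ← hsget]
      rw [this, hji']
    exact hj ⟨s, hsn⟩ hlt this
  have hmemdrop : i' ∈ L.drop (k : ℕ) := by
    have h1 : (L.drop (k : ℕ)).length = L.length - (k : ℕ) := List.length_drop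
    have h2 : s - (k : ℕ) < (L.drop (k : ℕ)).length := by omega
    have h3 : (L.drop (k : ℕ)).get ⟨s - (k : ℕ), h2⟩ = L.get ⟨s, hs⟩ := by
      simp only [List.get_eq_getElem, List.getElem_drop]
      congr 1
      omega
    rw [← hsget, ← h3]
    exact List.get_mem _ _
  have hk : (k : ℕ) < L.length := by omega
  have := hprop (k : ℕ) hk i' hmemdrop
  have hπk : π k = L.get ⟨(k : ℕ), hk⟩ := rfl
  rw [hπk, hji'] at *
  exact this
end
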